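/- arXiv:2002.07011 — 5 statements merged into one kernel-verified Lean document; each statement's English description precedes it below -/
import Mathlib

section
/- Let γ > 0 and let g : ℝ³ → [0,∞) be measurable with Φ_γ∘g Lebesgue integrable on ℝ³, and set c₁ := (3/(4π))·∫_{ℝ³} Φ_γ(g(x)) dx. Then for every x₀ ∈ ℝ³, every r > 0, and every A ≥ 0 satisfying Φ_γ(A) = c₁·r^{−3}, one has ∫_{B_r(x₀)} g(x) dx ≤ (4π r³/3)·A. -/
open MeasureTheory Real Set

/-!
`Φ_γ` is convex and strictly increasing on `[0, ∞)`: `F_γ` is convex because its derivative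
`log (1 + s) ^ (1 + γ) + (1 + γ) log (1 + s) ^ γ · s / (1 + s)` is increasing, and `t ↦ t ^ (3/2)`
is convex and increasing. Since `|B_r(x₀)| = 4πr³/3`, the hypothesis on `A` says
`Φ_γ(A) = |B|⁻¹ ∫ Φ_γ ∘ g`, so Jensen's inequality on the ball gives
`Φ_γ(⨍_B g) ≤ ⨍_B Φ_γ ∘ g ≤ Φ_γ(A)`, whence `⨍_B g ≤ A`.
-/

theorem ConvexOn.rpow {s : Set ℝ} {f : ℝ → ℝ} (hf : ConvexOn ℝ s f)
    (hf₀ : ∀ ⦃x⦄, x ∈ s → 0 ≤ f x) {p : ℝ} (hp : 1 ≤ p) :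
    ConvexOn ℝ s fun x ↦ f x ^ p := by
  refine ⟨hf.1, fun x hx y hy a b ha hb hab ↦ ?_⟩
  calc f (a • x + b • y) ^ p ≤ (a • f x + b • f y) ^ p :=
        rpow_le_rpow (hf₀ (hf.1 hx hy ha hb hab)) (hf.2 hx hy ha hb hab) (by linarith)
    _ ≤ a • f x ^ p + b • f y ^ p :=
        (convexOn_rpow hp).2 (hf₀ hx) (hf₀ hy) ha hb hab

namespace LlogL

noncomputable def F (γ s : ℝ) : ℝ := s * log (1 + s) ^ (1 + γ)

noncomputable def Φ (γ s : ℝ) : ℝ := F γ s ^ ((3 : ℝ) / 2)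

variable {γ : ℝ}

lemma log_one_add_nonneg {s : ℝ} (hs : 0 ≤ s) : 0 ≤ log (1 + s) :=
  log_nonneg (by linarith)

lemma log_one_add_le_log_one_add {a b : ℝ} (ha : 0 ≤ a) (hab : a ≤ b) :
    log (1 + a) ≤ log (1 + b) :=
  log_le_log (by linarith) (by linarith)

lemma F_nonneg {s : ℝ} (hs : 0 ≤ s) : 0 ≤ F γ s :=
  mul_nonneg hs (rpow_nonneg (log_one_add_nonneg hs) _)

lemma continuousOn_F (hγ : 0 ≤ 1 + γ) : ContinuousOn (F γ) (Ici 0) := by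
  have hlog : ContinuousOn (fun s : ℝ ↦ log (1 + s)) (Ici 0) :=
    ContinuousOn.log (by fun_prop) fun s hs ↦ by linarith [mem_Ici.1 hs]
  exact continuousOn_id.mul (hlog.rpow_const fun _ _ ↦ Or.inr hγ)

lemma strictMonoOn_F (hγ : 0 ≤ 1 + γ) : StrictMonoOn (F γ) (Ici 0) := by
  intro a ha b _ hab
  have hb0 : 0 < b := lt_of_le_of_lt ha hab
  calc F γ a ≤ a * log (1 + b) ^ (1 + γ) :=
        mul_le_mul_of_nonneg_left (rpow_le_rpow (log_one_add_nonneg ha)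
          (log_one_add_le_log_one_add ha hab.le) hγ) ha
    _ < F γ b := mul_lt_mul_of_pos_right hab (rpow_pos_of_pos (log_pos (by linarith)) _)

lemma hasDerivAt_F {s : ℝ} (hs : 0 < s) :
    HasDerivAt (F γ) (log (1 + s) ^ (1 + γ) + (1 + γ) * log (1 + s) ^ γ * (s / (1 + s))) s := by
  have hlog : HasDerivAt (fun s ↦ log (1 + s)) (1 / (1 + s)) s := by
    simpa using ((hasDerivAt_id' s).const_add 1).log (by simp; linarith)
  have hpow := hlog.rpow_const (p := 1 + γ) (Or.inl (log_pos (by linarith)).ne')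
  rw [add_sub_cancel_left] at hpow
  unfold F
  refine ((hasDerivAt_id' s).fun_mul hpow).congr_deriv ?_
  field_simp

lemma monotoneOn_deriv_F (hγ : 0 ≤ γ) :
    MonotoneOn (fun s ↦ log (1 + s) ^ (1 + γ) + (1 + γ) * log (1 + s) ^ γ * (s / (1 + s)))
      (Ioi 0) := by
  intro a ha b _ hab
  have ha : 0 ≤ a := le_of_lt ha
  have hlog := log_one_add_le_log_one_add ha hab
  have hfrac : a / (1 + a) ≤ b / (1 + b) := by
    rw [div_le_div_iff₀ (by linarith) (by linarith)]
    linarith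
  have hL := log_one_add_nonneg ha
  exact add_le_add (rpow_le_rpow hL hlog (by linarith)) <|
    mul_le_mul (mul_le_mul_of_nonneg_left (rpow_le_rpow hL hlog hγ) (by linarith)) hfrac
      (div_nonneg ha (by linarith))
      (mul_nonneg (by linarith) (rpow_nonneg (log_one_add_nonneg (ha.trans hab)) _))

lemma convexOn_F (hγ : 0 ≤ γ) : ConvexOn ℝ (Ici 0) (F γ) := by
  refine MonotoneOn.convexOn_of_deriv (convex_Ici 0) (continuousOn_F (by linarith)) ?_ ?_ <;>
    rw [interior_Ici]
  · exact fun s hs ↦ (hasDerivAt_F hs).differentiableAt.differentiableWithinAt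
  · exact (monotoneOn_deriv_F hγ).congr fun s hs ↦ (hasDerivAt_F hs).deriv.symm

lemma Φ_nonneg {s : ℝ} (hs : 0 ≤ s) : 0 ≤ Φ γ s :=
  rpow_nonneg (F_nonneg hs) _

lemma continuousOn_Φ (hγ : 0 ≤ 1 + γ) : ContinuousOn (Φ γ) (Ici 0) :=
  (continuousOn_F hγ).rpow_const fun _ _ ↦ Or.inr (by norm_num)

lemma strictMonoOn_Φ (hγ : 0 ≤ 1 + γ) : StrictMonoOn (Φ γ) (Ici 0) :=
  fun _ ha _ hb hab ↦ rpow_lt_rpow (F_nonneg ha) (strictMonoOn_F hγ ha hb hab) (by norm_num)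

lemma convexOn_Φ (hγ : 0 ≤ γ) : ConvexOn ℝ (Ici 0) (Φ γ) :=
  (convexOn_F hγ).rpow (fun _ hs ↦ F_nonneg hs) (by norm_num)

lemma le_three_add_Φ (hγ : 0 ≤ 1 + γ) {s : ℝ} (hs : 0 ≤ s) : s ≤ 3 + Φ γ s := by
  rcases le_or_gt s 3 with hs3 | hs3
  · linarith [Φ_nonneg (γ := γ) hs]
  have hlog : 1 ≤ log (1 + s) := by
    rw [le_log_iff_exp_le (by linarith)]
    linarith [exp_one_lt_d9]
  have hsF : s ≤ F γ s := le_mul_of_one_le_right hs (one_le_rpow hlog hγ)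
  have hFΦ : F γ s ≤ Φ γ s := self_le_rpow_of_one_le (by linarith) (by norm_num)
  linarith

lemma integrableOn_of_integrable_Φ_comp {α : Type*} [MeasurableSpace α] {μ : Measure α}
    {s : Set α} {g : α → ℝ} (hγ : 0 ≤ 1 + γ) (hs : μ s ≠ ⊤) (hg : AEStronglyMeasurable g μ)
    (hg0 : ∀ x, 0 ≤ g x) (hΦg : Integrable (fun x ↦ Φ γ (g x)) μ) : IntegrableOn g s μ := by
  have : Fact (μ s < ⊤) := ⟨hs.lt_top⟩
  refine ((integrable_const 3).add hΦg.integrableOn).mono' hg.restrict (ae_of_all _ fun x ↦ ?_)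
  rw [norm_of_nonneg (hg0 x)]
  exact le_three_add_Φ hγ (hg0 x)

end LlogL

theorem setIntegral_le_measureReal_mul_of_convexOn {α : Type*} [MeasurableSpace α]
    {μ : Measure α} {s : Set α} {D : Set ℝ} {Φ : ℝ → ℝ} {g : α → ℝ} {A : ℝ}
    (hΦ : ConvexOn ℝ D Φ) (hΦc : ContinuousOn Φ D) (hΦm : StrictMonoOn Φ D) (hD : IsClosed D)
    (h0 : μ s ≠ 0) (hs : μ s ≠ ⊤) (hgD : ∀ᵐ x ∂μ.restrict s, g x ∈ D)
    (hg : IntegrableOn g s μ) (hΦg : IntegrableOn (Φ ∘ g) s μ) (hA : A ∈ D)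
    (hΦA : ∫ x in s, Φ (g x) ∂μ ≤ μ.real s * Φ A) :
    ∫ x in s, g x ∂μ ≤ μ.real s * A := by
  have hμs : 0 < μ.real s := ENNReal.toReal_pos h0 hs
  have havg_mem : ⨍ x in s, g x ∂μ ∈ D := hΦ.1.set_average_mem hD h0 hs hgD hg
  have hjensen : Φ (⨍ x in s, g x ∂μ) ≤ Φ A := by
    refine (hΦ.map_set_average_le hΦc hD h0 hs hgD hg hΦg).trans ?_
    rw [setAverage_eq, smul_eq_mul, inv_mul_le_iff₀ hμs]
    exact hΦA
  rw [← measure_smul_setAverage g hs, smul_eq_mul]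
  exact mul_le_mul_of_nonneg_left ((hΦm.le_iff_le havg_mem hA).1 hjensen) hμs.le

/-- Jensen-type estimate: if `g : ℝ³ → [0,∞)` is measurable with `Φ_γ ∘ g` integrable,
`c₁ = (3/(4π)) ∫ Φ_γ(g)`, then for all `x₀`, `r > 0` and `A ≥ 0` with `Φ_γ(A) = c₁ r⁻³`,
one has `∫_{B_r(x₀)} g ≤ (4π r³ / 3) A`.  Here `Φ_γ(s) = (s (log (1+s))^(1+γ))^(3/2)`. -/
theorem integral_ball_le_of_Phi_eq (γ : ℝ) (hγ : 0 < γ)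
    (g : EuclideanSpace ℝ (Fin 3) → ℝ) (hg : Measurable g) (hg0 : ∀ x, 0 ≤ g x)
    (hint : Integrable (fun x => (g x * Real.log (1 + g x) ^ (1 + γ)) ^ ((3 : ℝ) / 2)))
    (c₁ : ℝ)
    (hc₁ : c₁ = 3 / (4 * π) * ∫ x, (g x * Real.log (1 + g x) ^ (1 + γ)) ^ ((3 : ℝ) / 2))
    (x₀ : EuclideanSpace ℝ (Fin 3)) (r : ℝ) (hr : 0 < r) (A : ℝ) (hA : 0 ≤ A)
    (hΦA : (A * Real.log (1 + A) ^ (1 + γ)) ^ ((3 : ℝ) / 2) = c₁ * r ^ (-3 : ℝ)) :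
    ∫ x in Metric.ball x₀ r, g x ≤ 4 * π * r ^ 3 / 3 * A := by
  change Integrable (fun x ↦ LlogL.Φ γ (g x)) at hint
  change LlogL.Φ γ A = c₁ * r ^ (-3 : ℝ) at hΦA
  change c₁ = 3 / (4 * π) * ∫ x, LlogL.Φ γ (g x) at hc₁
  have hball : volume (Metric.ball x₀ r) ≠ ⊤ := measure_ball_lt_top.ne
  have hvol : volume.real (Metric.ball x₀ r) = 4 * π * r ^ 3 / 3 := by
    rw [measureReal_def, EuclideanSpace.volume_ball_fin_three, ENNReal.toReal_mul,
      ENNReal.toReal_pow, ENNReal.toReal_ofReal hr.le, ENNReal.toReal_ofReal (by positivity)]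
    ring
  have hΦ_total : ∫ x, LlogL.Φ γ (g x) = volume.real (Metric.ball x₀ r) * LlogL.Φ γ A := by
    rw [hΦA, hc₁, hvol, rpow_neg hr.le, rpow_ofNat]
    field_simp
  rw [← hvol]
  have hγ' : 0 ≤ 1 + γ := by linarith
  refine setIntegral_le_measureReal_mul_of_convexOn (LlogL.convexOn_Φ hγ.le)
    (LlogL.continuousOn_Φ hγ') (LlogL.strictMonoOn_Φ hγ') isClosed_Ici
    (Metric.measure_ball_pos volume x₀ hr).ne' hball (ae_of_all _ hg0)
    (LlogL.integrableOn_of_integrable_Φ_comp hγ' hball hg.aestronglyMeasurable hg0 hint)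
    hint.integrableOn hA ?_
  exact hΦ_total ▸ setIntegral_le_integral hint (ae_of_all _ fun x ↦ LlogL.Φ_nonneg (hg0 x))
end

section
/- Let γ > 0 and let f be a nonnegative measurable function on ℝ³ such that F_γ∘f ∈ L^{3/2}(ℝ³). Then there exists R_γ ∈ (0,1] such that sup over 0 < r < R_γ and over x₀ ∈ ℝ³ of the quantity ((log(1/r))^{1+γ}/r) · ∫_{B_r(x₀)} f(x) dx is finite. -/
/-!
Take `R = 1`. On a ball `B = B_r(x₀)` with `0 < r < 1` put `L = (log (1/r))^(1+γ)`. Where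
`f > 1/r` we have `log (1 + f) ≥ log (1/r)`, so pointwise `L f ≤ L/r + F_γ(f)`, and
integrating, `(L/r) ∫_B f ≤ L |B| / r² + (1/r) ∫_B F_γ(f)`.
Since `|B| = |B₁| r³`, the first term is `|B₁| L r ≤ |B₁| (1+γ)^(1+γ)`, because
`log x ≤ (1+γ) x^(1/(1+γ))`. By Hölder, `∫_B F_γ(f) ≤ ‖F_γ(f)‖_{3/2} |B|^{1/3}`, and
`|B|^{1/3} = |B₁|^{1/3} r` is exactly the factor `r` needed to bound the second term.
-/

open MeasureTheory Real Metric Module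
open scoped ENNReal

lemma log_one_div_rpow_mul_le {a r : ℝ} (ha : 0 < a) (hr : 0 < r) (hr1 : r ≤ 1) :
    log (1 / r) ^ a * r ≤ a ^ a := by
  have hlog : log (1 / r) ≤ a * (1 / r) ^ a⁻¹ := by
    simpa [div_inv_eq_mul, mul_comm] using
      log_le_rpow_div (x := 1 / r) (by positivity) (inv_pos.2 ha)
  calc log (1 / r) ^ a * r ≤ (a * (1 / r) ^ a⁻¹) ^ a * r := by
        gcongr
        exact log_nonneg (one_le_one_div hr hr1)
    _ = a ^ a := by
        rw [mul_rpow ha.le (by positivity), ← rpow_mul (by positivity), inv_mul_cancel₀ ha.ne',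
          rpow_one]
        field_simp

lemma ofReal_log_rpow_mul_le {a t : ℝ} (ha : 0 ≤ a) (ht : 1 < t) (s : ℝ) :
    ENNReal.ofReal (log t ^ a * s) ≤
      ENNReal.ofReal (log t ^ a * t) + ‖s * log (1 + s) ^ a‖ₑ := by
  rcases le_or_gt s t with hst | hts
  · refine le_add_right (ENNReal.ofReal_le_ofReal ?_)
    gcongr
    exact rpow_nonneg (log_pos ht).le _
  · refine le_add_left ((ENNReal.ofReal_le_ofReal ?_).trans (ofReal_le_enorm _))
    rw [mul_comm]
    gcongr
    · linarith
    · exact (log_pos ht).le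
    · linarith

lemma ofReal_log_rpow_mul_setLIntegral_le {α : Type*} [MeasurableSpace α] (μ : Measure α)
    (s : Set α) (f : α → ℝ) {a t : ℝ} (ha : 0 ≤ a) (ht : 1 < t) :
    ENNReal.ofReal (log t ^ a) * ∫⁻ x in s, ENNReal.ofReal (f x) ∂μ ≤
      ENNReal.ofReal (log t ^ a * t) * μ s +
        ∫⁻ x in s, ‖f x * log (1 + f x) ^ a‖ₑ ∂μ := by
  rw [← lintegral_const_mul' _ _ ENNReal.ofReal_ne_top, ← setLIntegral_const,
    ← lintegral_add_left measurable_const]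
  refine lintegral_mono fun x => ?_
  rw [← ENNReal.ofReal_mul (rpow_nonneg (log_pos ht).le _)]
  exact ofReal_log_rpow_mul_le ha ht (f x)

lemma setLIntegral_enorm_le_eLpNorm_mul_measure_rpow {α E : Type*} [MeasurableSpace α]
    [NormedAddCommGroup E] {μ : Measure α} {g : α → E} {p : ℝ≥0∞} (hp : 1 ≤ p)
    (hg : AEStronglyMeasurable g μ) (s : Set α) :
    ∫⁻ x in s, ‖g x‖ₑ ∂μ ≤ eLpNorm g p μ * μ s ^ (1 - p.toReal⁻¹) := by
  calc ∫⁻ x in s, ‖g x‖ₑ ∂μ = eLpNorm g 1 (μ.restrict s) :=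
        eLpNorm_one_eq_lintegral_enorm.symm
    _ ≤ eLpNorm g p (μ.restrict s) *
          μ.restrict s Set.univ ^ (1 / (1 : ℝ≥0∞).toReal - 1 / p.toReal) :=
        eLpNorm_le_eLpNorm_mul_rpow_measure_univ hp hg.restrict
    _ ≤ eLpNorm g p μ * μ s ^ (1 - p.toReal⁻¹) := by
        rw [Measure.restrict_apply_univ]
        simp only [ENNReal.toReal_one, div_one, one_div]
        gcongr
        exact Measure.restrict_le_self

section Ball

variable {E : Type*} [NormedAddCommGroup E] [NormedSpace ℝ E] [MeasurableSpace E] [BorelSpace E]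
  [FiniteDimensional ℝ E] (μ : Measure E) [μ.IsAddHaarMeasure]

lemma measure_ball_rpow_inv_three (hE : finrank ℝ E = 3) (x₀ : E) {r : ℝ} (hr : 0 < r) :
    μ (ball x₀ r) ^ (3⁻¹ : ℝ) = ENNReal.ofReal r * μ (ball 0 1) ^ (3⁻¹ : ℝ) := by
  rw [Measure.addHaar_ball_of_pos μ x₀ hr, hE, ENNReal.ofReal_pow hr.le,
    ENNReal.mul_rpow_of_nonneg _ _ (by norm_num)]
  exact congrArg (· * _) <| by
    exact_mod_cast ENNReal.pow_rpow_inv_natCast (n := 3) (by norm_num) _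

lemma ofReal_log_rpow_div_mul_setLIntegral_ball_le (hE : finrank ℝ E = 3) {a : ℝ} (ha : 0 < a)
    {f : E → ℝ} (hF : AEStronglyMeasurable (fun x => f x * log (1 + f x) ^ a) μ)
    {r : ℝ} (hr : 0 < r) (hr1 : r < 1) (x₀ : E) :
    ENNReal.ofReal (log (1 / r) ^ a / r) * ∫⁻ x in ball x₀ r, ENNReal.ofReal (f x) ∂μ ≤
      ENNReal.ofReal (a ^ a) * μ (ball 0 1) +
        eLpNorm (fun x => f x * log (1 + f x) ^ a) (3 / 2) μ * μ (ball 0 1) ^ (3⁻¹ : ℝ) := by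
  set L := log (1 / r) ^ a
  have hL : 0 ≤ L := rpow_nonneg (log_nonneg (one_le_one_div hr hr1.le)) a
  have hexp : 1 - ((3 / 2 : ℝ≥0∞).toReal)⁻¹ = 3⁻¹ := by
    rw [ENNReal.toReal_div]
    norm_num
  have hρ0 : ENNReal.ofReal r ≠ 0 := by simpa using hr
  rw [← ENNReal.mul_le_mul_iff_right hρ0 ENNReal.ofReal_ne_top]
  calc ENNReal.ofReal r *
        (ENNReal.ofReal (L / r) * ∫⁻ x in ball x₀ r, ENNReal.ofReal (f x) ∂μ)
      = ENNReal.ofReal L * ∫⁻ x in ball x₀ r, ENNReal.ofReal (f x) ∂μ := by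
        rw [← mul_assoc, ← ENNReal.ofReal_mul hr.le, mul_div_cancel₀ _ hr.ne']
    _ ≤ ENNReal.ofReal (L * (1 / r)) * μ (ball x₀ r) +
          ∫⁻ x in ball x₀ r, ‖f x * log (1 + f x) ^ a‖ₑ ∂μ :=
        ofReal_log_rpow_mul_setLIntegral_le μ _ f ha.le (one_lt_one_div hr hr1)
    _ ≤ ENNReal.ofReal (r * a ^ a) * μ (ball 0 1) +
          eLpNorm (fun x => f x * log (1 + f x) ^ a) (3 / 2) μ *
            (ENNReal.ofReal r * μ (ball 0 1) ^ (3⁻¹ : ℝ)) := by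
        refine add_le_add ?_ ?_
        · rw [Measure.addHaar_ball_of_pos μ x₀ hr, hE, ← mul_assoc,
            ← ENNReal.ofReal_mul (by positivity)]
          gcongr ENNReal.ofReal ?_ * _
          calc L * (1 / r) * r ^ 3 = r * (L * r) := by field_simp
            _ ≤ r * a ^ a := by gcongr; exact log_one_div_rpow_mul_le ha hr hr1.le
        · rw [← measure_ball_rpow_inv_three μ hE x₀ hr, ← hexp]
          exact setLIntegral_enorm_le_eLpNorm_mul_measure_rpow
            (by rw [ENNReal.le_div_iff_mul_le] <;> norm_num) hF _
    _ = _ := by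
        rw [ENNReal.ofReal_mul hr.le]
        ring

end Ball

theorem exists_radius_sup_lt_top_general (γ : ℝ) (hγ : 0 < γ)
    (f : EuclideanSpace ℝ (Fin 3) → ℝ)
    (hmem : MemLp (fun x => f x * Real.log (1 + f x) ^ (1 + γ)) (3 / 2) volume) :
    ∃ R : ℝ, 0 < R ∧ R ≤ 1 ∧ ∃ M : ℝ,
      ∀ r : ℝ, 0 < r → r < R → ∀ x₀ : EuclideanSpace ℝ (Fin 3),
        ENNReal.ofReal (Real.log (1 / r) ^ (1 + γ) / r) *
            ∫⁻ x in Metric.ball x₀ r, ENNReal.ofReal (f x) ≤ ENNReal.ofReal M := by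
  set V := volume (ball (0 : EuclideanSpace ℝ (Fin 3)) 1)
  set N := eLpNorm (fun x => f x * log (1 + f x) ^ (1 + γ)) (3 / 2) volume
  have hV : V ≠ ∞ := measure_ball_lt_top.ne
  have hN : N ≠ ∞ := hmem.eLpNorm_ne_top
  refine ⟨1, one_pos, le_rfl,
    (ENNReal.ofReal ((1 + γ) ^ (1 + γ)) * V + N * V ^ (3⁻¹ : ℝ)).toReal,
    fun r hr hr1 x₀ => ?_⟩
  rw [ENNReal.ofReal_toReal (by finiteness)]
  exact ofReal_log_rpow_div_mul_setLIntegral_ball_le volume finrank_euclideanSpace_fin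
    (by positivity) hmem.1 hr hr1 x₀

/-- Lemma 1.1: if `f ≥ 0` is measurable on `ℝ³` and `F_γ ∘ f ∈ L^{3/2}(ℝ³)`, then there
exists `R_γ ∈ (0,1]` such that
`sup_{0<r<R_γ} sup_{x₀} ((log (1/r))^(1+γ) / r) ∫_{B_r(x₀)} f < ∞`. -/
theorem exists_radius_sup_lt_top (γ : ℝ) (hγ : 0 < γ)
    (f : EuclideanSpace ℝ (Fin 3) → ℝ) (hf : Measurable f) (hf0 : ∀ x, 0 ≤ f x)
    (hmem : MemLp (fun x => f x * Real.log (1 + f x) ^ (1 + γ)) (3 / 2) volume) :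
    ∃ R : ℝ, 0 < R ∧ R ≤ 1 ∧ ∃ M : ℝ,
      ∀ r : ℝ, 0 < r → r < R → ∀ x₀ : EuclideanSpace ℝ (Fin 3),
        ENNReal.ofReal (Real.log (1 / r) ^ (1 + γ) / r) *
            ∫⁻ x in Metric.ball x₀ r, ENNReal.ofReal (f x) ≤ ENNReal.ofReal M :=
  exists_radius_sup_lt_top_general γ hγ f hmem
end

section
/- For every γ > 0 and every K ≥ 0 there exist R ∈ (0,1] and M < ∞, depending only on γ and K, such that for every nonnegative measurable function f on ℝ³ with ‖F_γ∘f‖_{L^{3/2}(ℝ³)} ≤ K, one has ((log(1/r))^{1+γ}/r) · ∫_{B_r(x₀)} f(x) dx ≤ M for all 0 < r < R and all x₀ ∈ ℝ³. -/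
open MeasureTheory Real

open scoped ENNReal

lemma rpow_mul_exp_neg_le {t a : ℝ} (ht : 0 ≤ t) (ha : 0 < a) :
    t ^ a * Real.exp (-t) ≤ a ^ a := by
  have h1 : t ≤ a * Real.exp (t / a) := by
    have h2 : t / a ≤ Real.exp (t / a) := (Real.add_one_le_exp _).trans' (by linarith)
    calc t = a * (t / a) := by field_simp
    _ ≤ a * Real.exp (t / a) := by nlinarith [Real.exp_pos (t/a)]
  have h3 : t ^ a ≤ (a * Real.exp (t / a)) ^ a :=
    Real.rpow_le_rpow ht h1 ha.le
  have h4 : (a * Real.exp (t / a)) ^ a = a ^ a * Real.exp t := by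
    rw [Real.mul_rpow ha.le (Real.exp_pos _).le,
        Real.rpow_def_of_pos (Real.exp_pos _), Real.log_exp]
    field_simp
  calc t ^ a * Real.exp (-t) ≤ (a ^ a * Real.exp t) * Real.exp (-t) := by
        rw [← h4]; exact mul_le_mul_of_nonneg_right h3 (Real.exp_pos _).le
  _ = a ^ a := by rw [mul_assoc, ← Real.exp_add]; simp

lemma log_rpow_mul_le {r γ : ℝ} (hr : 0 < r) (hr1 : r < 1) (hγ : 0 < 1 + γ) :
    Real.log (1 / r) ^ (1 + γ) * r ≤ (1 + γ) ^ (1 + γ) := by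
  have ht : 0 ≤ Real.log (1 / r) := (Real.log_pos (one_lt_one_div hr hr1)).le
  have hrexp : r = Real.exp (-(Real.log (1 / r))) := by
    rw [Real.log_div one_ne_zero hr.ne', Real.log_one, zero_sub, neg_neg, Real.exp_log hr]
  calc Real.log (1 / r) ^ (1 + γ) * r
      = Real.log (1 / r) ^ (1 + γ) * Real.exp (-(Real.log (1 / r))) := by rw [← hrexp]
  _ ≤ (1 + γ) ^ (1 + γ) := rpow_mul_exp_neg_le ht hγ

/-- Uniform version of Lemma 1.1: for every `γ > 0` and `K ≥ 0` there exist `R ∈ (0,1]`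
and `M < ∞`, depending only on `γ` and `K`, such that every measurable `f ≥ 0` with
`‖F_γ ∘ f‖_{L^{3/2}(ℝ³)} ≤ K` satisfies
`((log (1/r))^(1+γ) / r) ∫_{B_r(x₀)} f ≤ M` for all `0 < r < R` and all `x₀ ∈ ℝ³`. -/
theorem exists_uniform_radius_bound (γ K : ℝ) (hγ : 0 < γ) (hK : 0 ≤ K) :
    ∃ R : ℝ, 0 < R ∧ R ≤ 1 ∧ ∃ M : ℝ,
      ∀ f : EuclideanSpace ℝ (Fin 3) → ℝ, Measurable f → (∀ x, 0 ≤ f x) →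
        eLpNorm (fun x => f x * Real.log (1 + f x) ^ (1 + γ)) (3 / 2) volume ≤
          ENNReal.ofReal K →
        ∀ r : ℝ, 0 < r → r < R → ∀ x₀ : EuclideanSpace ℝ (Fin 3),
          ENNReal.ofReal (Real.log (1 / r) ^ (1 + γ) / r) *
              ∫⁻ x in Metric.ball x₀ r, ENNReal.ofReal (f x) ≤ ENNReal.ofReal M := by
  refine ⟨1, one_pos, le_refl 1, ?_⟩
  set V : ℝ≥0∞ := volume (Metric.ball (0 : EuclideanSpace ℝ (Fin 3)) 1) with hVdef
  have hVtop : V ≠ ⊤ := measure_ball_lt_top.ne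
  have hVp3top : V ^ ((3:ℝ)⁻¹) ≠ ⊤ :=
    (ENNReal.rpow_lt_top_of_nonneg (by norm_num) hVtop).ne
  refine ⟨(1 + γ) ^ (1 + γ) * V.toReal + K * (V ^ ((3:ℝ)⁻¹)).toReal, ?_⟩
  intro f hf hf0 hfK r hr hr1 x₀
  have hγ1 : (0:ℝ) < 1 + γ := by linarith
  have hrpos : (0:ℝ) < 1 / r := by positivity
  have hL : 0 ≤ Real.log (1 / r) := (Real.log_pos (one_lt_one_div hr hr1)).le
  have hD : 0 < Real.log (1 + 1 / r) := Real.log_pos (by linarith)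
  have hDp : 0 < Real.log (1 + 1 / r) ^ (1 + γ) := Real.rpow_pos_of_pos hD _
  set F : EuclideanSpace ℝ (Fin 3) → ℝ := fun x => f x * Real.log (1 + f x) ^ (1 + γ) with hFdef
  have hF0 : ∀ x, 0 ≤ F x := fun x =>
    mul_nonneg (hf0 x) (Real.rpow_nonneg (Real.log_nonneg (by linarith [hf0 x])) _)
  have hmeasF : Measurable F :=
    hf.mul ((Real.measurable_log.comp (measurable_const.add hf)).pow_const _)
  have key : ∀ x, f x ≤ 1 / r + F x / Real.log (1 + 1 / r) ^ (1 + γ) := by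
    intro x
    rcases le_or_gt (f x) (1 / r) with h | h
    · have h0 : 0 ≤ F x / Real.log (1 + 1 / r) ^ (1 + γ) := div_nonneg (hF0 x) hDp.le
      linarith
    · have h1 : Real.log (1 + 1 / r) ^ (1 + γ) ≤ Real.log (1 + f x) ^ (1 + γ) :=
        Real.rpow_le_rpow hD.le (Real.log_le_log (by linarith) (by linarith)) hγ1.le
      have h2 : f x ≤ F x / Real.log (1 + 1 / r) ^ (1 + γ) := by
        rw [le_div_iff₀ hDp]
        exact mul_le_mul_of_nonneg_left h1 (hf0 x)
      linarith
  set B := Metric.ball x₀ r with hB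
  have hBvol : volume B = ENNReal.ofReal (r ^ 3) * V := by
    rw [hB, hVdef, Measure.addHaar_ball volume x₀ hr.le, finrank_euclideanSpace_fin]
  -- Step 1: splitting
  have step1 : ∫⁻ x in B, ENNReal.ofReal (f x) ≤
      ENNReal.ofReal (1 / r) * volume B +
      (ENNReal.ofReal (Real.log (1 + 1 / r) ^ (1 + γ)))⁻¹ *
        ∫⁻ x in B, ENNReal.ofReal (F x) := by
    calc ∫⁻ x in B, ENNReal.ofReal (f x)
        ≤ ∫⁻ x in B, (ENNReal.ofReal (1 / r) +
            (ENNReal.ofReal (Real.log (1 + 1 / r) ^ (1 + γ)))⁻¹ * ENNReal.ofReal (F x)) := by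
          refine lintegral_mono fun x => ?_
          calc ENNReal.ofReal (f x)
              ≤ ENNReal.ofReal (1 / r + F x / Real.log (1 + 1 / r) ^ (1 + γ)) :=
                ENNReal.ofReal_le_ofReal (key x)
          _ = _ := by
              rw [ENNReal.ofReal_add hrpos.le (div_nonneg (hF0 x) hDp.le),
                  ENNReal.ofReal_div_of_pos hDp, ENNReal.div_eq_inv_mul]
    _ = _ := by
        rw [lintegral_add_left measurable_const,
            lintegral_const_mul _ (hmeasF.ennreal_ofReal), setLIntegral_const]
  -- Step 2: Hölder
  have holder : ∫⁻ x in B, ENNReal.ofReal (F x) ≤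
      ENNReal.ofReal K * (volume B) ^ ((3:ℝ)⁻¹) := by
    have h1 : ∫⁻ x in B, ENNReal.ofReal (F x) = eLpNorm F 1 (volume.restrict B) := by
      rw [eLpNorm_one_eq_lintegral_enorm]
      exact lintegral_congr fun x => (Real.enorm_eq_ofReal (hF0 x)).symm
    have h2 := eLpNorm_le_eLpNorm_mul_rpow_measure_univ (p := 1) (q := 3/2)
      (by rw [ENNReal.le_div_iff_mul_le (Or.inl two_ne_zero) (Or.inl ENNReal.ofNat_ne_top)]
          norm_num)
      (μ := volume.restrict B) hmeasF.aestronglyMeasurable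
    have hexp : 1 / (1 : ℝ≥0∞).toReal - 1 / (3/2 : ℝ≥0∞).toReal = (3:ℝ)⁻¹ := by
      rw [ENNReal.toReal_div]; norm_num
    rw [hexp, Measure.restrict_apply_univ] at h2
    rw [h1]
    refine h2.trans ?_
    gcongr
    exact (eLpNorm_mono_measure F Measure.restrict_le_self).trans hfK
  -- volume powers
  have hr3 : ((r ^ 3 : ℝ)) ^ ((3:ℝ)⁻¹) = r := by
    rw [← Real.rpow_natCast r 3, ← Real.rpow_mul hr.le]
    norm_num
  have hvolpow : (volume B) ^ ((3:ℝ)⁻¹) = ENNReal.ofReal r * V ^ ((3:ℝ)⁻¹) := by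
    rw [hBvol, ENNReal.mul_rpow_of_nonneg _ _ (by norm_num),
        ENNReal.ofReal_rpow_of_pos (by positivity), hr3]
  -- combine
  calc ENNReal.ofReal (Real.log (1 / r) ^ (1 + γ) / r) * ∫⁻ x in B, ENNReal.ofReal (f x)
      ≤ ENNReal.ofReal (Real.log (1 / r) ^ (1 + γ) / r) *
        (ENNReal.ofReal (1 / r) * (ENNReal.ofReal (r ^ 3) * V) +
         (ENNReal.ofReal (Real.log (1 + 1 / r) ^ (1 + γ)))⁻¹ *
           (ENNReal.ofReal K * (ENNReal.ofReal r * V ^ ((3:ℝ)⁻¹)))) := by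
        gcongr
        rw [← hBvol]
        refine step1.trans ?_
        gcongr
        rw [← hvolpow]
        exact holder
  _ = ENNReal.ofReal (Real.log (1 / r) ^ (1 + γ) / r * (1 / r * r ^ 3)) * V +
      ENNReal.ofReal (Real.log (1 / r) ^ (1 + γ) / r *
        ((Real.log (1 + 1 / r) ^ (1 + γ))⁻¹ * (K * r))) * V ^ ((3:ℝ)⁻¹) := by
      rw [← ENNReal.ofReal_inv_of_pos hDp]
      rw [mul_add]
      congr 1
      · rw [ENNReal.ofReal_mul (by positivity), ENNReal.ofReal_mul (by positivity)]
        ring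
      · rw [ENNReal.ofReal_mul (by positivity), ENNReal.ofReal_mul (by positivity),
            ENNReal.ofReal_mul (by positivity)]
        ring
  _ ≤ ENNReal.ofReal ((1 + γ) ^ (1 + γ)) * V + ENNReal.ofReal K * V ^ ((3:ℝ)⁻¹) := by
      gcongr
      · have : Real.log (1 / r) ^ (1 + γ) / r * (1 / r * r ^ 3)
            = Real.log (1 / r) ^ (1 + γ) * r := by field_simp
        rw [this]
        exact log_rpow_mul_le hr hr1 hγ1
      · have hLD : Real.log (1 / r) ^ (1 + γ) ≤ Real.log (1 + 1 / r) ^ (1 + γ) :=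
          Real.rpow_le_rpow hL (Real.log_le_log (by positivity) (by linarith)) hγ1.le
        have h1 : Real.log (1 / r) ^ (1 + γ) / r *
            ((Real.log (1 + 1 / r) ^ (1 + γ))⁻¹ * (K * r))
            = K * (Real.log (1 / r) ^ (1 + γ) / Real.log (1 + 1 / r) ^ (1 + γ)) := by
          rw [show Real.log (1 / r) ^ (1 + γ) / r *
                ((Real.log (1 + 1 / r) ^ (1 + γ))⁻¹ * (K * r))
              = (r / r) * (K * (Real.log (1 / r) ^ (1 + γ) /
                  Real.log (1 + 1 / r) ^ (1 + γ))) by ring,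
             div_self hr.ne', one_mul]
        rw [h1]
        have h2 : Real.log (1 / r) ^ (1 + γ) / Real.log (1 + 1 / r) ^ (1 + γ) ≤ 1 :=
          div_le_one_of_le₀ hLD hDp.le
        nlinarith
  _ ≤ ENNReal.ofReal ((1 + γ) ^ (1 + γ) * V.toReal + K * (V ^ ((3:ℝ)⁻¹)).toReal) := by
      rw [ENNReal.ofReal_add (by positivity) (by positivity),
          ENNReal.ofReal_mul (by positivity), ENNReal.ofReal_mul hK,
          ENNReal.ofReal_toReal hVtop, ENNReal.ofReal_toReal hVp3top]
end

section
/- Let γ > 0 and let f be a nonnegative measurable function on ℝ³. If there exists R ∈ (0,1] such that sup over 0 < r < R and x₀ ∈ ℝ³ of ((log(1/r))^{1+γ}/r)·∫_{B_r(x₀)} f(x) dx is finite, then lim_{r→0+} sup_{x₀∈ℝ³} ∫_{B_r(x₀)} f(x)/|x−x₀| dx = 0. -/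
/-!
On the annulus `r / 2 ^ (k + 1) ≤ |x - x₀| < r / 2 ^ k` the kernel `1 / |x - x₀|` is at most
`2 ^ (k + 1) / r`, while the hypothesis bounds the mass of `f` on `B_{r / 2 ^ k}(x₀)` by
`M (r / 2 ^ k) / (L + k log 2) ^ (1 + γ)` with `L = log (1 / r)`. So the `k`-th annulus
contributes at most `2 M / (L + k log 2) ^ (1 + γ)`, and for `L ≥ log 2` this is at most
`2 M ((k + 1) log 2) ^ (-(1 + γ / 2)) L ^ (-γ / 2)`: a summable sequence in `k` times
`L ^ (-γ / 2)`, which tends to `0` as `r → 0⁺`, uniformly in `x₀`.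
-/

open MeasureTheory Real Filter Topology Metric
open scoped ENNReal

theorem Real.log_one_div_div_two_pow {r : ℝ} (hr : 0 < r) (k : ℕ) :
    log (1 / (r / 2 ^ k)) = log (1 / r) + k * log 2 := by
  rw [one_div_div, log_div (by positivity) hr.ne', log_pow, one_div, log_inv]
  ring

theorem Real.add_mul_rpow_neg_le {a L γ : ℝ} (ha : 0 < a) (haL : a ≤ L) (hγ : 0 < γ) (k : ℕ) :
    (L + k * a) ^ (-(1 + γ)) ≤ a ^ (-(1 + γ / 2)) * ((k : ℝ) + 1) ^ (-(1 + γ / 2)) *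
      L ^ (-(γ / 2)) := by
  have hL : 0 < L := ha.trans_le haL
  calc (L + k * a) ^ (-(1 + γ))
      = (L + k * a) ^ (-(1 + γ / 2)) * (L + k * a) ^ (-(γ / 2)) := by
        rw [← rpow_add (by positivity)]; ring_nf
    _ ≤ (((k : ℝ) + 1) * a) ^ (-(1 + γ / 2)) * L ^ (-(γ / 2)) := by
        gcongr ?_ * ?_
        · exact rpow_le_rpow_of_nonpos (by positivity) (by linarith) (by linarith)
        · exact rpow_le_rpow_of_nonpos hL (le_add_of_nonneg_right (by positivity)) (by linarith)
    _ = _ := by rw [mul_rpow (by positivity) ha.le, mul_comm (_ ^ _) (a ^ _)]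

theorem Real.summable_nat_add_one_rpow_neg {p : ℝ} (hp : 1 < p) :
    Summable fun k : ℕ => ((k : ℝ) + 1) ^ (-p) := by
  have := (summable_nat_add_iff 1).mpr (Real.summable_nat_rpow.mpr (by linarith : -p < -1))
  exact_mod_cast this

theorem tendsto_log_one_div_rpow_neg_nhdsGT_zero {s : ℝ} (hs : 0 < s) :
    Tendsto (fun r : ℝ => log (1 / r) ^ (-s)) (𝓝[>] 0) (𝓝 0) := by
  simp only [one_div]
  exact (tendsto_rpow_neg_atTop hs).comp (tendsto_log_atTop.comp tendsto_inv_nhdsGT_zero)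

theorem ENNReal.div_ofReal_le_of_ofReal_mul_le {I : ℝ≥0∞} {a b M : ℝ} (ha : 0 < a) (hb : 0 < b)
    (h : ENNReal.ofReal a * I ≤ ENNReal.ofReal M) :
    I / ENNReal.ofReal b ≤ ENNReal.ofReal (M / (a * b)) := by
  have hI : I ≤ ENNReal.ofReal M / ENNReal.ofReal a := by
    rw [ENNReal.le_div_iff_mul_le (Or.inl (ENNReal.ofReal_pos.mpr ha).ne')
      (Or.inl ENNReal.ofReal_ne_top), mul_comm]
    exact h
  calc I / ENNReal.ofReal b ≤ ENNReal.ofReal M / ENNReal.ofReal a / ENNReal.ofReal b := by gcongr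
    _ = ENNReal.ofReal (M / (a * b)) := by
      rw [← ENNReal.ofReal_div_of_pos ha, ← ENNReal.ofReal_div_of_pos hb, div_div]

section MetricMeasure

variable {X : Type*} [MetricSpace X]

theorem exists_mem_ball_div_two_pow_diff {x x₀ : X} {r : ℝ} (hx : x ∈ ball x₀ r) (hne : x ≠ x₀) :
    ∃ k : ℕ, x ∈ ball x₀ (r / 2 ^ k) \ ball x₀ (r / 2 ^ (k + 1)) := by
  have hd : 0 < dist x x₀ := dist_pos.mpr hne
  have hr : 1 < r / dist x x₀ := (one_lt_div hd).mpr hx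
  obtain ⟨n, hn_lt, hn_le⟩ := exists_mem_Ioc_zpow (zero_lt_one.trans hr) one_lt_two
  have hn : 0 ≤ n := by
    by_contra! hneg
    have : (2 : ℝ) ^ (n + 1) ≤ 1 := zpow_le_one_of_nonpos₀ one_le_two (by omega)
    linarith
  lift n to ℕ using hn
  refine ⟨n, ?_, ?_⟩
  · rw [mem_ball, lt_div_iff₀ (by positivity), mul_comm, ← lt_div_iff₀ hd]
    exact_mod_cast hn_lt
  · rw [mem_ball, not_lt, div_le_iff₀ (by positivity), mul_comm, ← div_le_iff₀ hd]
    exact_mod_cast hn_le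

variable [MeasurableSpace X] [OpensMeasurableSpace X] {μ : Measure X}

theorem setLIntegral_diff_ball_div_dist_le {s : Set X} (hs : MeasurableSet s) (g : X → ℝ≥0∞)
    (x₀ : X) {ρ : ℝ} (hρ : 0 < ρ) :
    ∫⁻ x in s \ ball x₀ ρ, g x / ENNReal.ofReal (dist x x₀) ∂μ ≤
      (∫⁻ x in s, g x ∂μ) / ENNReal.ofReal ρ := by
  calc ∫⁻ x in s \ ball x₀ ρ, g x / ENNReal.ofReal (dist x x₀) ∂μ
      ≤ ∫⁻ x in s \ ball x₀ ρ, g x / ENNReal.ofReal ρ ∂μ := by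
        refine setLIntegral_mono' (hs.diff measurableSet_ball) fun x hx => ?_
        gcongr
        simpa using hx.2
    _ = (∫⁻ x in s \ ball x₀ ρ, g x ∂μ) / ENNReal.ofReal ρ := by
        simp only [div_eq_mul_inv]
        exact lintegral_mul_const' _ _ (ENNReal.inv_ne_top.mpr (ENNReal.ofReal_pos.mpr hρ).ne')
    _ ≤ (∫⁻ x in s, g x ∂μ) / ENNReal.ofReal ρ := by
        gcongr
        exact Set.sdiff_subset

theorem setLIntegral_ball_div_dist_le_tsum [NullSingletonClass μ] (g : X → ℝ≥0∞) (x₀ : X) (r : ℝ) :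
    ∫⁻ x in ball x₀ r, g x / ENNReal.ofReal (dist x x₀) ∂μ ≤
      ∑' k : ℕ, (∫⁻ x in ball x₀ (r / 2 ^ k), g x ∂μ) / ENNReal.ofReal (r / 2 ^ (k + 1)) := by
  rcases le_or_gt r 0 with hr | hr
  · simp [ball_eq_empty.mpr hr]
  have hcover : ball x₀ r \ {x₀} ⊆ ⋃ k : ℕ, ball x₀ (r / 2 ^ k) \ ball x₀ (r / 2 ^ (k + 1)) :=
    fun x hx => Set.mem_iUnion.mpr (exists_mem_ball_div_two_pow_diff hx.1 hx.2)
  calc ∫⁻ x in ball x₀ r, g x / ENNReal.ofReal (dist x x₀) ∂μ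
      -- the centre, where the integrand is `g x₀ / 0 = ∞`, is a null set
      = ∫⁻ x in ball x₀ r \ {x₀}, g x / ENNReal.ofReal (dist x x₀) ∂μ :=
        (setLIntegral_congr (sdiff_null_ae_eq_self (measure_singleton x₀))).symm
    _ ≤ ∑' k : ℕ, ∫⁻ x in ball x₀ (r / 2 ^ k) \ ball x₀ (r / 2 ^ (k + 1)),
          g x / ENNReal.ofReal (dist x x₀) ∂μ :=
        (lintegral_mono_set hcover).trans (lintegral_iUnion_le _ _)
    _ ≤ _ := ENNReal.tsum_le_tsum fun k =>
        setLIntegral_diff_ball_div_dist_le measurableSet_ball g x₀ (by positivity)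

theorem setLIntegral_ball_div_dist_le_of_log_bound [NullSingletonClass μ] {g : X → ℝ≥0∞}
    {γ R M : ℝ} (hγ : 0 < γ) (hM : 0 ≤ M)
    (h : ∀ r : ℝ, 0 < r → r < R → ∀ x₀ : X,
      ENNReal.ofReal (log (1 / r) ^ (1 + γ) / r) * ∫⁻ x in ball x₀ r, g x ∂μ ≤ ENNReal.ofReal M)
    {r : ℝ} (hr0 : 0 < r) (hrR : r < R) (hr2 : r ≤ 1 / 2) (x₀ : X) :
    ∫⁻ x in ball x₀ r, g x / ENNReal.ofReal (dist x x₀) ∂μ ≤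
      ENNReal.ofReal (2 * M * log 2 ^ (-(1 + γ / 2)) * (∑' k : ℕ, ((k : ℝ) + 1) ^ (-(1 + γ / 2))) *
        log (1 / r) ^ (-(γ / 2))) := by
  set L := log (1 / r)
  have hp : 1 < 1 + γ / 2 := by linarith
  set p := 1 + γ / 2
  have hlog2 : 0 < log 2 := log_pos one_lt_two
  have hL : log 2 ≤ L := log_le_log two_pos (by rw [le_div_iff₀ hr0]; linarith)
  have hL0 : 0 < L := hlog2.trans_le hL
  set c : ℕ → ℝ := fun k => 2 * M * log 2 ^ (-p) * ((k : ℝ) + 1) ^ (-p) * L ^ (-(γ / 2))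
  have hc : ∀ k, 0 ≤ c k := fun k => by positivity
  have hterm : ∀ k : ℕ, (∫⁻ x in ball x₀ (r / 2 ^ k), g x ∂μ) / ENNReal.ofReal (r / 2 ^ (k + 1))
      ≤ ENNReal.ofReal (c k) := by
    intro k
    set ρ := r / 2 ^ k
    have hρ : 0 < ρ := by positivity
    have hρR : ρ < R := (div_le_self hr0.le (one_le_pow₀ one_le_two)).trans_lt hrR
    have hLρ : log (1 / ρ) = L + k * log 2 := log_one_div_div_two_pow hr0 k
    have hLρ_pos : 0 < log (1 / ρ) := by rw [hLρ]; positivity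
    refine (ENNReal.div_ofReal_le_of_ofReal_mul_le (div_pos (rpow_pos_of_pos hLρ_pos _) hρ)
      (by positivity) (h ρ hρ hρR x₀)).trans (ENNReal.ofReal_le_ofReal ?_)
    calc M / (log (1 / ρ) ^ (1 + γ) / ρ * (r / 2 ^ (k + 1)))
        = 2 * M * (L + k * log 2) ^ (-(1 + γ)) := by
          rw [← hLρ, rpow_neg hLρ_pos.le, pow_succ, ← div_div]
          field_simp
          simp only [ρ]
          field_simp
      _ ≤ c k := by
          simp only [c, mul_assoc]
          gcongr
          simpa only [mul_assoc] using add_mul_rpow_neg_le hlog2 hL hγ k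
  have hc_sum : Summable c :=
    (((summable_nat_add_one_rpow_neg hp).mul_left (2 * M * log 2 ^ (-p))).mul_right
      (L ^ (-(γ / 2)))).congr fun k => by simp only [c]
  calc ∫⁻ x in ball x₀ r, g x / ENNReal.ofReal (dist x x₀) ∂μ
      ≤ ∑' k : ℕ, (∫⁻ x in ball x₀ (r / 2 ^ k), g x ∂μ) / ENNReal.ofReal (r / 2 ^ (k + 1)) :=
        setLIntegral_ball_div_dist_le_tsum g x₀ r
    _ ≤ ∑' k, ENNReal.ofReal (c k) := ENNReal.tsum_le_tsum hterm
    _ = ENNReal.ofReal (∑' k, c k) := (ENNReal.ofReal_tsum_of_nonneg hc hc_sum).symm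
    _ = _ := by simp only [c, tsum_mul_right, tsum_mul_left]

end MetricMeasure

theorem tendsto_sup_lintegral_div_dist_general (γ : ℝ) (hγ : 0 < γ)
    (f : EuclideanSpace ℝ (Fin 3) → ℝ)
    (h : ∃ R : ℝ, 0 < R ∧ R ≤ 1 ∧ ∃ M : ℝ,
      ∀ r : ℝ, 0 < r → r < R → ∀ x₀ : EuclideanSpace ℝ (Fin 3),
        ENNReal.ofReal (Real.log (1 / r) ^ (1 + γ) / r) *
            ∫⁻ x in Metric.ball x₀ r, ENNReal.ofReal (f x) ≤ ENNReal.ofReal M) :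
    Tendsto (fun r : ℝ => ⨆ x₀ : EuclideanSpace ℝ (Fin 3),
        ∫⁻ x in Metric.ball x₀ r, ENNReal.ofReal (f x) / ENNReal.ofReal ‖x - x₀‖)
      (𝓝[>] 0) (𝓝 0) := by
  obtain ⟨R, hR, -, M, hM⟩ := h
  have hM' := fun r hr hrR x₀ => (hM r hr hrR x₀).trans (ENNReal.ofReal_le_ofReal (le_max_left M 0))
  set C := 2 * max M 0 * log 2 ^ (-(1 + γ / 2)) * ∑' k : ℕ, ((k : ℝ) + 1) ^ (-(1 + γ / 2))
  have hbound : ∀ᶠ r in 𝓝[>] 0, (⨆ x₀ : EuclideanSpace ℝ (Fin 3),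
      ∫⁻ x in ball x₀ r, ENNReal.ofReal (f x) / ENNReal.ofReal ‖x - x₀‖) ≤
        ENNReal.ofReal (C * log (1 / r) ^ (-(γ / 2))) := by
    filter_upwards [Ioo_mem_nhdsGT (lt_min hR one_half_pos)] with r ⟨hr0, hr⟩
    simp_rw [← dist_eq_norm]
    exact iSup_le fun x₀ => setLIntegral_ball_div_dist_le_of_log_bound hγ (le_max_right M 0) hM'
      hr0 (hr.trans_le (min_le_left _ _)) (hr.le.trans (min_le_right _ _)) x₀
  have hlim : Tendsto (fun r : ℝ => ENNReal.ofReal (C * log (1 / r) ^ (-(γ / 2))))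
      (𝓝[>] 0) (𝓝 0) := by
    simpa using ENNReal.tendsto_ofReal
      ((tendsto_log_one_div_rpow_neg_nhdsGT_zero (half_pos hγ)).const_mul C)
  exact tendsto_of_tendsto_of_tendsto_of_le_of_le' tendsto_const_nhds hlim
    (Eventually.of_forall fun _ => zero_le) hbound

/-- Lemma 1.2: if `f ≥ 0` is measurable on `ℝ³` and there is `R ∈ (0,1]` such that
`sup_{0<r<R} sup_{x₀} ((log (1/r))^(1+γ)/r) ∫_{B_r(x₀)} f < ∞`, then
`lim_{r → 0+} sup_{x₀} ∫_{B_r(x₀)} f(x)/|x-x₀| dx = 0`. -/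
theorem tendsto_sup_lintegral_div_dist (γ : ℝ) (hγ : 0 < γ)
    (f : EuclideanSpace ℝ (Fin 3) → ℝ) (hf : Measurable f) (hf0 : ∀ x, 0 ≤ f x)
    (h : ∃ R : ℝ, 0 < R ∧ R ≤ 1 ∧ ∃ M : ℝ,
      ∀ r : ℝ, 0 < r → r < R → ∀ x₀ : EuclideanSpace ℝ (Fin 3),
        ENNReal.ofReal (Real.log (1 / r) ^ (1 + γ) / r) *
            ∫⁻ x in Metric.ball x₀ r, ENNReal.ofReal (f x) ≤ ENNReal.ofReal M) :
    Tendsto (fun r : ℝ => ⨆ x₀ : EuclideanSpace ℝ (Fin 3),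
        ∫⁻ x in Metric.ball x₀ r, ENNReal.ofReal (f x) / ENNReal.ofReal ‖x - x₀‖)
      (𝓝[>] 0) (𝓝 0) :=
  tendsto_sup_lintegral_div_dist_general γ hγ f h
end

section
/- Let α ∈ [0,1], x₀ ∈ ℝ³, R > 0, and x ∈ ℝ³ with |x−x₀| < R. Then ∫_{B_R(x₀)} |x₀−y|^{−α}·|x−y|^{−1} dy = 4πR^{2−α}/(2−α) − 4π|x−x₀|^{2−α}/((3−α)(2−α)). -/
/-!
Translating `x₀` to the origin and reflecting `x - x₀` onto the first coordinate axis turn the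
integrand into `‖y‖ ^ (-α) * ‖d e₀ - y‖⁻¹` with `d = ‖x - x₀‖`. In spherical coordinates
`y = r (cos θ, sin θ ω)` about that axis, the angular integral is Newton's shell integral
`∫₀^π sin θ / √(d² + r² - 2 d r cos θ) dθ = 2 / max d r`, and the remaining radial integral
`4π ∫₀^R r ^ (2 - α) / max d r dr` splits at `r = d` into two power integrals.
Spherical coordinates come from polar coordinates used twice: first in the plane orthogonal to
the axis, then in the half-plane (axial coordinate, distance to the axis). Working with lower
Lebesgue integrals throughout, the integrability of the singular integrand comes for free.
-/

open MeasureTheory Real Set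

section Reduction

variable {E : Type*} [NormedAddCommGroup E] [MeasurableSpace E] [BorelSpace E]

theorem setIntegral_ball_norm_sub_eq_ball_zero (μ : Measure E) [μ.IsAddLeftInvariant]
    (F : ℝ → ℝ → ℝ) (x₀ x : E) (R : ℝ) :
    ∫ y in Metric.ball x₀ R, F ‖x₀ - y‖ ‖x - y‖ ∂μ =
      ∫ z in Metric.ball 0 R, F ‖z‖ ‖x - x₀ - z‖ ∂μ := by
  have hpre : (x₀ + ·) ⁻¹' Metric.ball x₀ R = Metric.ball 0 R := by ext z; simp
  rw [← (measurePreserving_add_left μ x₀).setIntegral_preimage_emb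
    (Homeomorph.addLeft x₀).measurableEmbedding]
  simp only [hpre, sub_add_cancel_left, norm_neg, sub_add_eq_sub_sub]

theorem setIntegral_ball_zero_norm_sub_eq_of_norm_eq [InnerProductSpace ℝ E]
    [FiniteDimensional ℝ E] (F : ℝ → ℝ → ℝ) {v w : E} (h : ‖v‖ = ‖w‖) (R : ℝ) :
    ∫ z in Metric.ball (0 : E) R, F ‖z‖ ‖v - z‖ = ∫ z in Metric.ball (0 : E) R, F ‖z‖ ‖w - z‖ := by
  set L := Submodule.reflection (ℝ ∙ (w - v))ᗮ
  have hL : L w = v := Submodule.reflection_sub h.symm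
  rw [← L.measurePreserving.setIntegral_preimage_emb L.toHomeomorph.measurableEmbedding,
    L.preimage_ball, map_zero]
  simp only [← hL, ← map_sub, L.norm_map]

end Reduction

theorem EuclideanSpace.measurePreserving_fin_three_toProd :
    MeasurePreserving (fun x : EuclideanSpace ℝ (Fin 3) => (x 0, x 1, x 2)) :=
  ((MeasurePreserving.id volume).prod (volume_preserving_finTwoArrow ℝ)).comp
    ((volume_preserving_piFinSuccAbove (fun _ : Fin 3 => ℝ) 0).comp
      (PiLp.volume_preserving_ofLp (Fin 3)))

theorem EuclideanSpace.norm_fin_three (x : EuclideanSpace ℝ (Fin 3)) :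
    ‖x‖ = √(x 0 ^ 2 + x 1 ^ 2 + x 2 ^ 2) := by
  simp [EuclideanSpace.norm_eq, Fin.sum_univ_three]

theorem sqrt_mul_cos_sq_add_mul_sin_sq {r : ℝ} (hr : 0 ≤ r) (θ : ℝ) :
    √((r * cos θ) ^ 2 + (r * sin θ) ^ 2) = r := by
  rw [mul_pow, mul_pow, ← mul_add, cos_sq_add_sin_sq, mul_one, sqrt_sq hr]

theorem sin_pos_iff_of_mem_Ioo {θ : ℝ} (hθ : θ ∈ Ioo (-π) π) : 0 < sin θ ↔ 0 < θ :=
  ⟨fun h => not_le.1 fun h' => h.not_ge (sin_nonpos_of_nonpos_of_neg_pi_le h' hθ.1.le),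
    fun h => sin_pos_of_pos_of_lt_pi h hθ.2⟩

theorem lintegral_comp_sqrt_sq_add_sq (g : ℝ → ENNReal) (hg : Measurable g) :
    ∫⁻ q : ℝ × ℝ, g √(q.1 ^ 2 + q.2 ^ 2) =
      ENNReal.ofReal (2 * π) * ∫⁻ s in Ioi 0, ENNReal.ofReal s * g s := by
  rw [← lintegral_comp_polarCoord_symm, polarCoord_target, Measure.volume_eq_prod,
    ← Measure.prod_restrict, lintegral_prod _ (by fun_prop),
    ← lintegral_const_mul' _ _ ENNReal.ofReal_ne_top]
  refine setLIntegral_congr_fun measurableSet_Ioi fun r (hr : 0 < r) => ?_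
  simp only [polarCoord_symm_apply, sqrt_mul_cos_sq_add_mul_sin_sq hr.le, smul_eq_mul,
    lintegral_const, Measure.restrict_apply_univ, volume_Ioo]
  rw [mul_comm, show π - -π = 2 * π by ring]

theorem lintegral_lintegral_Ioi_eq_polar (f : ℝ × ℝ → ENNReal) (hf : Measurable f) :
    ∫⁻ a, ∫⁻ s in Ioi 0, f (a, s) =
      ∫⁻ r in Ioi 0, ∫⁻ θ in Ioo 0 π, ENNReal.ofReal r * f (r * cos θ, r * sin θ) := by
  set H : Set (ℝ × ℝ) := {p | 0 < p.2}
  have hH : MeasurableSet H := measurableSet_lt measurable_const measurable_snd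
  calc ∫⁻ a, ∫⁻ s in Ioi 0, f (a, s) = ∫⁻ p : ℝ × ℝ, H.indicator f p := by
        rw [Measure.volume_eq_prod, lintegral_prod _ (hf.indicator hH).aemeasurable]
        refine lintegral_congr fun a => ?_
        rw [← lintegral_indicator measurableSet_Ioi]
        rfl
    _ = ∫⁻ r in Ioi 0, ∫⁻ θ in Ioo (-π) π,
          ENNReal.ofReal r * H.indicator f (r * cos θ, r * sin θ) := by
        rw [← lintegral_comp_polarCoord_symm, polarCoord_target, Measure.volume_eq_prod,
          ← Measure.prod_restrict, lintegral_prod _ (by fun_prop)]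
        rfl
    _ = _ := by
        refine setLIntegral_congr_fun measurableSet_Ioi fun r (hr : 0 < r) => ?_
        rw [← inter_eq_left.2 (Ioo_subset_Ioo_left (neg_neg_of_pos pi_pos).le),
          ← Measure.restrict_restrict measurableSet_Ioo,
          ← lintegral_indicator (s := Ioo 0 π) measurableSet_Ioo]
        refine setLIntegral_congr_fun measurableSet_Ioo fun θ hθ => ?_
        simp [H, indicator_apply, mul_pos_iff_of_pos_left hr, sin_pos_iff_of_mem_Ioo hθ, hθ.2]

theorem lintegral_comp_norm_apply_zero_eq_spherical (g : ℝ → ℝ → ENNReal)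
    (hg : Measurable (Function.uncurry g)) :
    ∫⁻ x : EuclideanSpace ℝ (Fin 3), g ‖x‖ (x 0) =
      ENNReal.ofReal (2 * π) *
        ∫⁻ r in Ioi 0, ∫⁻ θ in Ioo 0 π, ENNReal.ofReal (r ^ 2 * sin θ) * g r (r * cos θ) := by
  have hcyl (a : ℝ) : ∫⁻ q : ℝ × ℝ, g √(a ^ 2 + q.1 ^ 2 + q.2 ^ 2) a =
      ENNReal.ofReal (2 * π) * ∫⁻ s in Ioi 0, ENNReal.ofReal s * g √(a ^ 2 + s ^ 2) a := by
    rw [← lintegral_comp_sqrt_sq_add_sq (fun s => g √(a ^ 2 + s ^ 2) a) (by fun_prop)]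
    simp only [sq_sqrt (add_nonneg (sq_nonneg _) (sq_nonneg _)), add_assoc]
  simp only [EuclideanSpace.norm_fin_three]
  rw [EuclideanSpace.measurePreserving_fin_three_toProd.lintegral_comp
      (f := fun p => g √(p.1 ^ 2 + p.2.1 ^ 2 + p.2.2 ^ 2) p.1) (by fun_prop),
    Measure.volume_eq_prod, lintegral_prod _ (by fun_prop)]
  simp only [hcyl]
  rw [lintegral_const_mul' _ _ ENNReal.ofReal_ne_top,
    lintegral_lintegral_Ioi_eq_polar (fun p => ENNReal.ofReal p.2 * g √(p.1 ^ 2 + p.2 ^ 2) p.1)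
      (by fun_prop)]
  congr 1
  refine setLIntegral_congr_fun measurableSet_Ioi fun r (hr : 0 < r) => ?_
  refine setLIntegral_congr_fun measurableSet_Ioo fun θ _ => ?_
  rw [sqrt_mul_cos_sq_add_mul_sin_sq hr.le, ← mul_assoc, ← ENNReal.ofReal_mul hr.le, ← mul_assoc,
    ← sq]

section ShellIntegral

variable {d r : ℝ}

theorem sq_add_sq_sub_two_mul_mul_cos_pos (hd : 0 ≤ d) (hr : 0 ≤ r) (hdr : d ≠ r) (θ : ℝ) :
    0 < d ^ 2 + r ^ 2 - 2 * d * r * cos θ := by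
  nlinarith [cos_le_one θ, mul_nonneg hd hr, sq_pos_of_ne_zero (sub_ne_zero.2 hdr)]

theorem continuous_sin_mul_inv_sqrt (hd : 0 ≤ d) (hr : 0 ≤ r) (hdr : d ≠ r) :
    Continuous fun θ => sin θ * (√(d ^ 2 + r ^ 2 - 2 * d * r * cos θ))⁻¹ :=
  continuous_sin.mul <| (by fun_prop : Continuous _).inv₀ fun θ =>
    (sqrt_pos.2 (sq_add_sq_sub_two_mul_mul_cos_pos hd hr hdr θ)).ne'

theorem integral_sin_mul_inv_sqrt_eq_two_div_max (hd : 0 ≤ d) (hr : 0 ≤ r) (hdr : d ≠ r) :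
    ∫ θ in 0..π, sin θ * (√(d ^ 2 + r ^ 2 - 2 * d * r * cos θ))⁻¹ = 2 / max d r := by
  rcases (mul_nonneg hd hr).eq_or_lt with hdr0 | hdr0
  · have hmax : max d r = d + r := by
      rcases mul_eq_zero.1 hdr0.symm with rfl | rfl <;> simp [hd, hr]
    have hsq (θ : ℝ) : d ^ 2 + r ^ 2 - 2 * d * r * cos θ = (d + r) ^ 2 := by
      linear_combination 2 * (1 + cos θ) * hdr0
    simp only [hsq, sqrt_sq (add_nonneg hd hr), intervalIntegral.integral_mul_const,
      integral_sin, cos_zero, cos_pi, hmax]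
    ring
  · have hd0 : d ≠ 0 := left_ne_zero_of_mul hdr0.ne'
    have hr0 : r ≠ 0 := right_ne_zero_of_mul hdr0.ne'
    have hsqrt (θ : ℝ) : 0 < √(d ^ 2 + r ^ 2 - 2 * d * r * cos θ) :=
      sqrt_pos.2 (sq_add_sq_sub_two_mul_mul_cos_pos hd hr hdr θ)
    have hderiv (θ : ℝ) : HasDerivAt (fun θ => (d * r)⁻¹ * √(d ^ 2 + r ^ 2 - 2 * d * r * cos θ))
        (sin θ * (√(d ^ 2 + r ^ 2 - 2 * d * r * cos θ))⁻¹) θ := by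
      refine ((((hasDerivAt_cos θ).const_mul (2 * d * r)).const_sub (d ^ 2 + r ^ 2)).sqrt
        (sqrt_pos.1 (hsqrt θ)).ne' |>.const_mul (d * r)⁻¹).congr_deriv ?_
      have := (hsqrt θ).ne'
      field_simp
    rw [intervalIntegral.integral_eq_sub_of_hasDerivAt (fun θ _ => hderiv θ)
        ((continuous_sin_mul_inv_sqrt hd hr hdr).intervalIntegrable _ _), cos_pi, cos_zero,
      show d ^ 2 + r ^ 2 - 2 * d * r * -1 = (d + r) ^ 2 by ring,
      show d ^ 2 + r ^ 2 - 2 * d * r * 1 = (d - r) ^ 2 by ring,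
      sqrt_sq (add_nonneg hd hr), sqrt_sq_eq_abs]
    rcases le_total d r with h | h
    · rw [abs_of_nonpos (sub_nonpos.2 h), max_eq_right h]
      field_simp
      ring
    · rw [abs_of_nonneg (sub_nonneg.2 h), max_eq_left h]
      field_simp
      ring

theorem lintegral_Ioo_sin_mul_inv_sqrt_eq_two_div_max (hd : 0 ≤ d) (hr : 0 ≤ r) (hdr : d ≠ r) :
    ∫⁻ θ in Ioo 0 π, ENNReal.ofReal (sin θ * (√(d ^ 2 + r ^ 2 - 2 * d * r * cos θ))⁻¹) =
      ENNReal.ofReal (2 / max d r) := by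
  have hcont := continuous_sin_mul_inv_sqrt hd hr hdr
  rw [← ofReal_integral_eq_lintegral_ofReal (hcont.integrableOn_Icc.mono_set Ioo_subset_Icc_self)
    ((ae_restrict_mem measurableSet_Ioo).mono fun θ hθ =>
      mul_nonneg (sin_nonneg_of_nonneg_of_le_pi hθ.1.le hθ.2.le) (inv_nonneg.2 (sqrt_nonneg _))),
    ← integral_Ioc_eq_integral_Ioo, ← intervalIntegral.integral_of_le pi_pos.le,
    integral_sin_mul_inv_sqrt_eq_two_div_max hd hr hdr]

theorem lintegral_Ioo_sq_mul_sin_mul_rpow_neg_mul_inv_sqrt (α : ℝ) (hd : 0 ≤ d) (hr : 0 < r)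
    (hdr : d ≠ r) :
    ∫⁻ θ in Ioo 0 π, ENNReal.ofReal (r ^ 2 * sin θ) *
        ENNReal.ofReal (r ^ (-α) * (√(d ^ 2 + r ^ 2 - 2 * d * (r * cos θ)))⁻¹) =
      ENNReal.ofReal (r ^ (2 - α) * (2 / max d r)) := by
  have hpow : r ^ (2 - α) = r ^ 2 * r ^ (-α) := by rw [sub_eq_add_neg, rpow_add hr, rpow_two]
  calc _ = ∫⁻ θ in Ioo 0 π, ENNReal.ofReal (r ^ (2 - α)) *
          ENNReal.ofReal (sin θ * (√(d ^ 2 + r ^ 2 - 2 * d * r * cos θ))⁻¹) := by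
        refine setLIntegral_congr_fun measurableSet_Ioo fun θ hθ => ?_
        have hsin := sin_nonneg_of_nonneg_of_le_pi hθ.1.le hθ.2.le
        rw [← ENNReal.ofReal_mul (by positivity), ← ENNReal.ofReal_mul (by positivity), hpow,
          mul_assoc (2 * d) r]
        congr 1
        ring
    _ = _ := by
        rw [lintegral_const_mul' _ _ ENNReal.ofReal_ne_top,
          lintegral_Ioo_sin_mul_inv_sqrt_eq_two_div_max hd hr.le hdr,
          ← ENNReal.ofReal_mul (by positivity)]

end ShellIntegral

theorem lintegral_Ioc_ofReal_rpow {a b p : ℝ} (ha : 0 ≤ a) (hab : a ≤ b) (hp : -1 < p) :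
    ∫⁻ r in Ioc a b, ENNReal.ofReal (r ^ p) =
      ENNReal.ofReal ((b ^ (p + 1) - a ^ (p + 1)) / (p + 1)) := by
  rw [← ofReal_integral_eq_lintegral_ofReal
    (intervalIntegral.intervalIntegrable_rpow' hp (a := a) (b := b)).1
    ((ae_restrict_mem measurableSet_Ioc).mono fun r hr => rpow_nonneg (ha.trans hr.1.le) p),
    ← intervalIntegral.integral_of_le hab, integral_rpow (.inl hp)]

theorem lintegral_Ioo_rpow_mul_two_div_max {α d R : ℝ} (hα : α < 2) (hd : 0 ≤ d)
    (hdR : d < R) :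
    ∫⁻ r in Ioo 0 R, ENNReal.ofReal (r ^ (2 - α) * (2 / max d r)) =
      ENNReal.ofReal (2 * (d ^ (2 - α) / (3 - α) + (R ^ (2 - α) - d ^ (2 - α)) / (2 - α))) := by
  have h2α : 0 < 2 - α := by linarith
  have h3α : 0 < 3 - α := by linarith
  have hinner : ∫⁻ r in Ioc 0 d, ENNReal.ofReal (r ^ (2 - α) * (2 / max d r)) =
      ENNReal.ofReal (2 * (d ^ (2 - α) / (3 - α))) := by
    rcases hd.eq_or_lt with rfl | hd0
    · simp [zero_rpow h2α.ne']
    rw [setLIntegral_congr_fun measurableSet_Ioc fun r hr => by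
        rw [max_eq_left hr.2, ENNReal.ofReal_mul' (by positivity)],
      lintegral_mul_const' _ _ ENNReal.ofReal_ne_top,
      lintegral_Ioc_ofReal_rpow le_rfl hd (by linarith), ← ENNReal.ofReal_mul' (by positivity)]
    congr 1
    rw [zero_rpow (by linarith), rpow_add_one hd0.ne', show 2 - α + 1 = 3 - α by ring, sub_zero]
    field_simp
  have houter : ∫⁻ r in Ioo d R, ENNReal.ofReal (r ^ (2 - α) * (2 / max d r)) =
      ENNReal.ofReal (2 * ((R ^ (2 - α) - d ^ (2 - α)) / (2 - α))) := by
    rw [setLIntegral_congr_fun measurableSet_Ioo fun r hr => by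
        rw [max_eq_right hr.1.le, show 2 - α = 1 - α + 1 by ring,
          rpow_add_one (hd.trans_lt hr.1).ne', mul_assoc, mul_div_cancel₀ _ (hd.trans_lt hr.1).ne',
          ENNReal.ofReal_mul' zero_le_two],
      lintegral_mul_const' _ _ ENNReal.ofReal_ne_top, setLIntegral_congr Ioo_ae_eq_Ioc,
      lintegral_Ioc_ofReal_rpow hd hdR.le (by linarith), ← ENNReal.ofReal_mul' zero_le_two,
      mul_comm, show 1 - α + 1 = 2 - α by ring]
  have hRd : d ^ (2 - α) ≤ R ^ (2 - α) := rpow_le_rpow hd hdR.le h2α.le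
  rw [← Ioc_union_Ioo_eq_Ioo hd hdR,
    lintegral_union measurableSet_Ioo (disjoint_left.2 fun r h1 h2 => h2.1.not_ge h1.2),
    hinner, houter, ← ENNReal.ofReal_add (by positivity)
    (mul_nonneg zero_le_two (div_nonneg (sub_nonneg.2 hRd) h2α.le)), mul_add]

theorem EuclideanSpace.norm_single_sub {ι : Type*} [Fintype ι] [DecidableEq ι] (i : ι) (d : ℝ)
    (x : EuclideanSpace ℝ ι) :
    ‖EuclideanSpace.single i d - x‖ = √(d ^ 2 + ‖x‖ ^ 2 - 2 * d * x i) := by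
  rw [← sqrt_sq (norm_nonneg _), norm_sub_sq_real, EuclideanSpace.inner_single_left]
  simp only [PiLp.norm_single, norm_eq_abs, sq_abs, ringHom_apply]
  congr 1
  ring

theorem lintegral_ball_rpow_neg_mul_inv_norm_single_sub {α d R : ℝ} (hα : α < 2) (hd : 0 ≤ d)
    (hdR : d < R) :
    ∫⁻ x in Metric.ball (0 : EuclideanSpace ℝ (Fin 3)) R,
        ENNReal.ofReal (‖x‖ ^ (-α) * ‖EuclideanSpace.single 0 d - x‖ ^ (-1 : ℝ)) =
      ENNReal.ofReal (4 * π * (d ^ (2 - α) / (3 - α) + (R ^ (2 - α) - d ^ (2 - α)) / (2 - α))) := by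
  set g : ℝ → ℝ → ENNReal := fun r t =>
    if r < R then ENNReal.ofReal (r ^ (-α) * (√(d ^ 2 + r ^ 2 - 2 * d * t))⁻¹) else 0
  have hg : Measurable (Function.uncurry g) := by
    refine Measurable.ite (measurableSet_lt measurable_fst measurable_const) ?_ measurable_const
    fun_prop
  have hball : ∫⁻ x in Metric.ball (0 : EuclideanSpace ℝ (Fin 3)) R,
        ENNReal.ofReal (‖x‖ ^ (-α) * ‖EuclideanSpace.single 0 d - x‖ ^ (-1 : ℝ)) =
      ∫⁻ x : EuclideanSpace ℝ (Fin 3), g ‖x‖ (x 0) := by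
    rw [← lintegral_indicator measurableSet_ball]
    refine lintegral_congr fun x => ?_
    by_cases hx : ‖x‖ < R <;> simp [g, hx, EuclideanSpace.norm_single_sub, rpow_neg_one]
  have hshell : ∀ᵐ r ∂volume.restrict (Ioi 0),
      ∫⁻ θ in Ioo 0 π, ENNReal.ofReal (r ^ 2 * sin θ) * g r (r * cos θ) =
        (Iio R).indicator (fun r => ENNReal.ofReal (r ^ (2 - α) * (2 / max d r))) r := by
    filter_upwards [ae_restrict_mem measurableSet_Ioi, ae_restrict_of_ae (Measure.ae_ne volume d)]
      with r (hr : 0 < r) hrd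
    by_cases hrR : r < R
    · simp only [g, hrR, if_true, indicator_of_mem (mem_Iio.2 hrR)]
      exact lintegral_Ioo_sq_mul_sin_mul_rpow_neg_mul_inv_sqrt α hd hr (Ne.symm hrd)
    · simp [g, hrR]
  rw [hball, lintegral_comp_norm_apply_zero_eq_spherical g hg, lintegral_congr_ae hshell,
    lintegral_indicator measurableSet_Iio, Measure.restrict_restrict measurableSet_Iio,
    Iio_inter_Ioi, lintegral_Ioo_rpow_mul_two_div_max hα hd hdR,
    ← ENNReal.ofReal_mul (by positivity)]
  congr 1
  ring

theorem integral_ball_rpow_inv_dist_lt_general (α : ℝ) (hα1 : α ≤ 1)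
    (x₀ x : EuclideanSpace ℝ (Fin 3)) (R : ℝ) (hx : ‖x - x₀‖ < R) :
    ∫ y in Metric.ball x₀ R, ‖x₀ - y‖ ^ (-α) * ‖x - y‖ ^ (-1 : ℝ) =
      4 * π * R ^ (2 - α) / (2 - α) -
        4 * π * ‖x - x₀‖ ^ (2 - α) / ((3 - α) * (2 - α)) := by
  have h2α : 0 < 2 - α := by linarith
  have h3α : 0 < 3 - α := by linarith
  have hRd : ‖x - x₀‖ ^ (2 - α) ≤ R ^ (2 - α) := rpow_le_rpow (norm_nonneg _) hx.le h2α.le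
  have hsingle : ‖x - x₀‖ = ‖EuclideanSpace.single (0 : Fin 3) ‖x - x₀‖‖ := by simp
  rw [setIntegral_ball_norm_sub_eq_ball_zero volume (fun a b => a ^ (-α) * b ^ (-1 : ℝ)),
    setIntegral_ball_zero_norm_sub_eq_of_norm_eq (fun a b => a ^ (-α) * b ^ (-1 : ℝ)) hsingle,
    integral_eq_lintegral_of_nonneg_ae (ae_of_all _ fun _ => by positivity) (by fun_prop),
    lintegral_ball_rpow_neg_mul_inv_norm_single_sub (by linarith) (norm_nonneg _) hx,
    ENNReal.toReal_ofReal (mul_nonneg (by positivity)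
      (add_nonneg (by positivity) (div_nonneg (sub_nonneg.2 hRd) h2α.le)))]
  field_simp
  ring

/-- Newtonian-potential computation inside the ball: for `α ∈ [0,1]`, `R > 0` and
`|x-x₀| < R`,
`∫_{B_R(x₀)} |x₀-y|^(-α) |x-y|⁻¹ dy = 4πR^(2-α)/(2-α) - 4π|x-x₀|^(2-α)/((3-α)(2-α))`. -/
theorem integral_ball_rpow_inv_dist_lt (α : ℝ) (hα0 : 0 ≤ α) (hα1 : α ≤ 1)
    (x₀ x : EuclideanSpace ℝ (Fin 3)) (R : ℝ) (hR : 0 < R) (hx : ‖x - x₀‖ < R) :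
    ∫ y in Metric.ball x₀ R, ‖x₀ - y‖ ^ (-α) * ‖x - y‖ ^ (-1 : ℝ) =
      4 * π * R ^ (2 - α) / (2 - α) -
        4 * π * ‖x - x₀‖ ^ (2 - α) / ((3 - α) * (2 - α)) :=
  integral_ball_rpow_inv_dist_lt_general α hα1 x₀ x R hx
end
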